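/- Let (V, ⟨·,·⟩) be a finite-dimensional real inner product space, B and ψ symmetric endomorphisms with common orthonormal eigenbasis B Xᵢ = λ̄ᵢ Xᵢ, ψ Xᵢ = θᵢ Xᵢ, and define R(X,Y) = BX ∧ BY + ψX ∧ Y + X ∧ ψY with (X ∧ Y)Z = ⟨Y,Z⟩X − ⟨X,Z⟩Y. Then the following are equivalent: (a) for all i, j, k, l, ⟨R(Xᵢ,Xⱼ)X_k, X_l⟩·(λ̄_l − λ̄_k) = 0; (b) for all i ≠ j, (λ̄ᵢ − λ̄ⱼ)·(λ̄ᵢλ̄ⱼ + θᵢ + θⱼ) = 0. -/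

import Mathlib

/-!
On a common eigenbasis, `R(eᵢ, eⱼ) = (λᵢλⱼ + θᵢ + θⱼ) eᵢ ∧ eⱼ`, so `⟪R(eᵢ, eⱼ) eₖ, eₗ⟫` vanishes
unless `{k, l} = {i, j}` with `i ≠ j`, and both surviving index choices give
`±(λᵢ - λⱼ)(λᵢλⱼ + θᵢ + θⱼ)`.
-/

open RealInnerProductSpace

noncomputable def wedge {V : Type*} [NormedAddCommGroup V] [InnerProductSpace ℝ V]
    (X Y Z : V) : V := ⟪Y, Z⟫ • X - ⟪X, Z⟫ • Y

def wedgeCoeff {ι : Type*} [DecidableEq ι] (i j k l : ι) : ℝ :=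
  (if j = k then 1 else 0) * (if i = l then 1 else 0) -
    (if i = k then 1 else 0) * (if j = l then 1 else 0)

section Wedge

variable {V : Type*} [NormedAddCommGroup V] [InnerProductSpace ℝ V]

noncomputable def conformalCurvature (B ψ : V →ₗ[ℝ] V) (x y z : V) : V :=
  wedge (B x) (B y) z + wedge (ψ x) y z + wedge x (ψ y) z

theorem wedge_smul_left (a : ℝ) (x y z : V) : wedge (a • x) y z = a • wedge x y z := by
  simp only [wedge, real_inner_smul_left, smul_sub, smul_smul, mul_comm a]

theorem wedge_smul_right (a : ℝ) (x y z : V) : wedge x (a • y) z = a • wedge x y z := by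
  simp only [wedge, real_inner_smul_left, smul_sub, smul_smul, mul_comm a]

theorem conformalCurvature_of_eigenvectors {B ψ : V →ₗ[ℝ] V} {x y : V} {a b s t : ℝ}
    (hBx : B x = a • x) (hBy : B y = b • y) (hψx : ψ x = s • x) (hψy : ψ y = t • y) (z : V) :
    conformalCurvature B ψ x y z = (a * b + s + t) • wedge x y z := by
  simp only [conformalCurvature, hBx, hBy, hψx, hψy, wedge_smul_left, wedge_smul_right, smul_smul,
    mul_comm b a, add_smul]

theorem inner_wedge_of_orthonormal {ι : Type*} [DecidableEq ι] {e : ι → V}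
    (he : Orthonormal ℝ e) (i j k l : ι) :
    ⟪wedge (e i) (e j) (e k), e l⟫ = wedgeCoeff i j k l := by
  simp only [wedge, wedgeCoeff, inner_sub_left, real_inner_smul_left, orthonormal_iff_ite.mp he]

end Wedge

theorem forall_mul_wedgeCoeff_mul_sub_eq_zero_iff {ι : Type*} [DecidableEq ι] (lam : ι → ℝ)
    (c : ℝ) (i j : ι) :
    (∀ k l, c * wedgeCoeff i j k l * (lam l - lam k) = 0) ↔ (i ≠ j → (lam i - lam j) * c = 0) := by
  constructor
  · intro h hij
    have hji := h j i
    simp only [wedgeCoeff, if_true, hij, Ne.symm hij, if_false] at hji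
    linear_combination hji
  · intro h k l
    rcases eq_or_ne i j with rfl | hij
    · simp only [wedgeCoeff, sub_self, mul_zero, zero_mul]
    · have hc := h hij
      unfold wedgeCoeff
      split_ifs <;> subst_vars <;> first | ring1 | linear_combination hc

theorem stmt_12_general {V : Type*} [NormedAddCommGroup V] [InnerProductSpace ℝ V]
    (n : ℕ)
    (e : OrthonormalBasis (Fin n) ℝ V)
    (B ψ : V →ₗ[ℝ] V)
    (lam θ : Fin n → ℝ)
    (hBe : ∀ i, B (e i) = lam i • e i) (hψe : ∀ i, ψ (e i) = θ i • e i)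
    (R : V → V → V → V)
    (hR : ∀ x y z, R x y z = wedge (B x) (B y) z + wedge (ψ x) y z + wedge x (ψ y) z) :
    (∀ i j k l : Fin n, ⟪R (e i) (e j) (e k), e l⟫ * (lam l - lam k) = 0) ↔
    (∀ i j : Fin n, i ≠ j → (lam i - lam j) * (lam i * lam j + θ i + θ j) = 0) := by
  obtain rfl : R = conformalCurvature B ψ := funext fun x => funext fun y => funext (hR x y)
  simp only [conformalCurvature_of_eigenvectors (hBe _) (hBe _) (hψe _) (hψe _),
    real_inner_smul_left, inner_wedge_of_orthonormal e.orthonormal]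
  exact forall₂_congr fun i j => forall_mul_wedgeCoeff_mul_sub_eq_zero_iff lam _ i j

theorem stmt_12 {V : Type*} [NormedAddCommGroup V] [InnerProductSpace ℝ V]
    [FiniteDimensional ℝ V] (n : ℕ)
    (e : OrthonormalBasis (Fin n) ℝ V)
    (B ψ : V →ₗ[ℝ] V) (hB : B.IsSymmetric) (hψ : ψ.IsSymmetric)
    (lam θ : Fin n → ℝ)
    (hBe : ∀ i, B (e i) = lam i • e i) (hψe : ∀ i, ψ (e i) = θ i • e i)
    (R : V → V → V → V)
    (hR : ∀ x y z, R x y z = wedge (B x) (B y) z + wedge (ψ x) y z + wedge x (ψ y) z) :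
    (∀ i j k l : Fin n, ⟪R (e i) (e j) (e k), e l⟫ * (lam l - lam k) = 0) ↔
    (∀ i j : Fin n, i ≠ j → (lam i - lam j) * (lam i * lam j + θ i + θ j) = 0) :=
  stmt_12_general n e B ψ lam θ hBe hψe R hR
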